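/- Fix a ∈ ℝ, μ ≥ a and σ > 0, and let the left-truncated Gaussian on [a, ∞) with parameters μ, σ have mean M and density f. Let H = f(a)/f(μ) = e^{−(μ−a)²/(2σ²)} ∈ (0, 1], and set ξ_H = erf(√(ln(1/H))) + 1. Then the variance of the distribution equals (M − a)²·(π·ξ_H² − 2H·ξ_H·√(π·ln(1/H)) − 2H²) / (2·(ξ_H·√(π·ln(1/H)) + H)²). -/

import Mathlib

/-! Integration by parts against the Gaussian bump `g x = exp (-(x - μ)² / (2σ²))` gives
`∫_a^∞ (x - μ) g = σ² g(a)` and `∫_a^∞ (x - μ)² g = σ² Z + σ² (a - μ) g(a)`, while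
`Z = ∫_a^∞ g = σ √(π/2) (erf t + 1)` with `t = (μ - a) / (σ √2)`. Hence `M - μ = σ² g(a) / Z` and
`Var = σ² + σ² (a - μ) g(a) / Z - (M - μ)²`, the classical truncated-normal moments. Finally
`H = g(a) = exp (-t²)`, so `√(log (1/H)) = t` and `ξ_H = erf t + 1`, and the claimed formula is
an algebraic rearrangement of these. -/

open MeasureTheory Real Filter Set

/-- The error function. -/
noncomputable def erf (x : ℝ) : ℝ :=
  (2 / Real.sqrt Real.pi) * ∫ t in (0:ℝ)..x, Real.exp (-t ^ 2)

/-- `ξ(r) = erf(r/√2) + 1`. -/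
noncomputable def xi (r : ℝ) : ℝ := erf (r / Real.sqrt 2) + 1

/-- Normalizing constant of the left-truncated Gaussian on `[a, ∞)` with parameters `μ, σ`. -/
noncomputable def lZ (a μ σ : ℝ) : ℝ :=
  ∫ x in Set.Ici a, Real.exp (-(x - μ) ^ 2 / (2 * σ ^ 2))

/-- Mean of the left-truncated Gaussian on `[a, ∞)` with parameters `μ, σ`. -/
noncomputable def lMean (a μ σ : ℝ) : ℝ :=
  (∫ x in Set.Ici a, x * Real.exp (-(x - μ) ^ 2 / (2 * σ ^ 2))) / lZ a μ σ

/-- Variance of the left-truncated Gaussian on `[a, ∞)` with parameters `μ, σ`. -/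
noncomputable def lVar (a μ σ : ℝ) : ℝ :=
  (∫ x in Set.Ici a, (x - lMean a μ σ) ^ 2 * Real.exp (-(x - μ) ^ 2 / (2 * σ ^ 2))) / lZ a μ σ

open Topology

theorem hasDerivAt_erf (x : ℝ) : HasDerivAt erf (2 / √π * exp (-x ^ 2)) x :=
  ((continuous_exp.comp (continuous_pow 2).neg).integral_hasStrictDerivAt 0 x).hasDerivAt
    |>.const_mul _

theorem tendsto_erf_atTop : Tendsto erf atTop (𝓝 1) := by
  have hint : IntegrableOn (fun t : ℝ => exp (-t ^ 2)) (Ioi 0) := by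
    simpa using (integrable_exp_neg_mul_sq one_pos).integrableOn
  have hlim : ∫ t in Ioi (0 : ℝ), exp (-t ^ 2) = √π / 2 := by
    simpa using integral_gaussian_Ioi 1
  have h := (intervalIntegral_tendsto_integral_Ioi 0 hint tendsto_id).const_mul (2 / √π)
  rwa [hlim, div_mul_div_cancel₀' (by positivity), div_self (by positivity)] at h

theorem erf_neg (x : ℝ) : erf (-x) = -erf x := by
  simp only [erf, ← mul_neg, ← intervalIntegral.integral_symm]
  congr 1
  have h := intervalIntegral.integral_comp_neg (a := 0) (b := -x) fun t => exp (-t ^ 2)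
  simp only [neg_sq, neg_neg, neg_zero] at h
  exact h

theorem erf_nonneg {x : ℝ} (hx : 0 ≤ x) : 0 ≤ erf x :=
  mul_nonneg (by positivity) (intervalIntegral.integral_nonneg hx fun _ _ => (exp_pos _).le)

noncomputable def gaussBump (μ σ x : ℝ) : ℝ := exp (-(x - μ) ^ 2 / (2 * σ ^ 2))

theorem integral_Ici_eq_neg_of_hasDerivAt {f f' : ℝ → ℝ} (a : ℝ)
    (hderiv : ∀ x, HasDerivAt f (f' x) x) (hf : Integrable f) (hf' : Integrable f') :
    ∫ x in Ici a, f' x = -f a := by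
  have hlim := tendsto_zero_of_hasDerivAt_of_integrableOn_Ioi (a := a) (fun x _ => hderiv x)
    hf'.integrableOn hf.integrableOn
  rw [integral_Ici_eq_integral_Ioi,
    integral_Ioi_of_hasDerivAt_of_tendsto' (fun x _ => hderiv x) hf'.integrableOn hlim, zero_sub]

theorem hasDerivAt_gaussBump (μ σ x : ℝ) :
    HasDerivAt (gaussBump μ σ) (-((x - μ) * gaussBump μ σ x) / σ ^ 2) x := by
  have hexponent : HasDerivAt (fun y => -(y - μ) ^ 2 / (2 * σ ^ 2)) (-(x - μ) / σ ^ 2) x := by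
    refine ((((hasDerivAt_id' x).sub_const μ).pow 2).neg.div_const _).congr_deriv ?_
    ring
  exact hexponent.exp.congr_deriv (by rw [gaussBump]; ring)

theorem gaussBump_eq_exp_neg_sq (μ σ x : ℝ) :
    gaussBump μ σ x = exp (-((x - μ) / (σ * √2)) ^ 2) := by
  rw [gaussBump, div_pow, mul_pow, sq_sqrt zero_le_two, neg_div, mul_comm]

section gaussBump

variable (μ : ℝ) {σ : ℝ} (hσ : 0 < σ)
include hσ

theorem integrable_sub_pow_mul_gaussBump (n : ℕ) :
    Integrable fun x => (x - μ) ^ n * gaussBump μ σ x := by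
  have hb : (0 : ℝ) < 1 / (2 * σ ^ 2) := by positivity
  refine ((integrable_rpow_mul_exp_neg_mul_sq hb (s := n) (by linarith [n.cast_nonneg (α := ℝ)])
    ).comp_sub_right μ).congr (.of_forall fun x => ?_)
  simp only [rpow_natCast, gaussBump]
  ring_nf

theorem integrable_gaussBump : Integrable (gaussBump μ σ) := by
  simpa using integrable_sub_pow_mul_gaussBump μ hσ 0

theorem integrable_sub_mul_gaussBump : Integrable fun x => (x - μ) * gaussBump μ σ x := by
  simpa using integrable_sub_pow_mul_gaussBump μ hσ 1

theorem integral_Ici_sub_mul_gaussBump (a : ℝ) :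
    ∫ x in Ici a, (x - μ) * gaussBump μ σ x = σ ^ 2 * gaussBump μ σ a := by
  have hderiv (x : ℝ) : HasDerivAt (fun x => -σ ^ 2 * gaussBump μ σ x)
      ((x - μ) * gaussBump μ σ x) x :=
    ((hasDerivAt_gaussBump μ σ x).const_mul _).congr_deriv (by field_simp)
  rw [integral_Ici_eq_neg_of_hasDerivAt a hderiv ((integrable_gaussBump μ hσ).const_mul _)
    (integrable_sub_mul_gaussBump μ hσ)]
  ring

theorem integral_Ici_sub_sq_mul_gaussBump (a : ℝ) :
    ∫ x in Ici a, (x - μ) ^ 2 * gaussBump μ σ x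
      = σ ^ 2 * (∫ x in Ici a, gaussBump μ σ x) + σ ^ 2 * (a - μ) * gaussBump μ σ a := by
  have hderiv (x : ℝ) : HasDerivAt (fun x => -σ ^ 2 * ((x - μ) * gaussBump μ σ x))
      ((x - μ) ^ 2 * gaussBump μ σ x - σ ^ 2 * gaussBump μ σ x) x := by
    refine ((((hasDerivAt_id' x).sub_const μ).mul (hasDerivAt_gaussBump μ σ x)).const_mul _
      ).congr_deriv ?_
    field_simp
    ring
  have hparts := integral_Ici_eq_neg_of_hasDerivAt a hderiv
    ((integrable_sub_mul_gaussBump μ hσ).const_mul _)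
    ((integrable_sub_pow_mul_gaussBump μ hσ 2).sub ((integrable_gaussBump μ hσ).const_mul _))
  rw [integral_sub (integrable_sub_pow_mul_gaussBump μ hσ 2).integrableOn
    ((integrable_gaussBump μ hσ).const_mul _).integrableOn, integral_const_mul] at hparts
  linear_combination hparts

theorem integral_Ici_gaussBump (a : ℝ) :
    ∫ x in Ici a, gaussBump μ σ x = σ * √2 * √π / 2 * (erf ((μ - a) / (σ * √2)) + 1) := by
  have hc : 0 < σ * √2 := by positivity
  have hderiv (x : ℝ) (_ : x ∈ Ici a) : HasDerivAt
      (fun x => σ * √2 * √π / 2 * erf ((x - μ) / (σ * √2))) (gaussBump μ σ x) x := by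
    refine (((hasDerivAt_erf _).comp x (((hasDerivAt_id' x).sub_const μ).div_const _)).const_mul
      (σ * √2 * √π / 2)).congr_deriv ?_
    rw [gaussBump_eq_exp_neg_sq]
    field_simp
  have hlim : Tendsto (fun x => σ * √2 * √π / 2 * erf ((x - μ) / (σ * √2))) atTop
      (𝓝 (σ * √2 * √π / 2 * 1)) := by
    refine (tendsto_erf_atTop.comp (Tendsto.atTop_div_const hc ?_)).const_mul _
    simpa [sub_eq_add_neg] using tendsto_atTop_add_const_right atTop (-μ) tendsto_id
  rw [integral_Ici_eq_integral_Ioi, integral_Ioi_of_hasDerivAt_of_tendsto' hderiv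
    (integrable_gaussBump μ hσ).integrableOn hlim, ← neg_sub μ a, neg_div, erf_neg]
  ring

end gaussBump

theorem lZ_eq_integral (a μ σ : ℝ) : lZ a μ σ = ∫ x in Ici a, gaussBump μ σ x := rfl

section truncatedMoments

variable (a μ : ℝ) {σ : ℝ} (hσ : 0 < σ)
include hσ

theorem lZ_pos : 0 < lZ a μ σ := by
  have : NeZero (volume.restrict (Ici a)) := ⟨by simp⟩
  exact integral_exp_pos (f := fun x => -(x - μ) ^ 2 / (2 * σ ^ 2))
    (integrable_gaussBump μ hσ).integrableOn

theorem lMean_sub : lMean a μ σ - μ = σ ^ 2 * gaussBump μ σ a / lZ a μ σ := by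
  have hfirst : ∫ x in Ici a, x * gaussBump μ σ x = σ ^ 2 * gaussBump μ σ a + μ * lZ a μ σ := by
    calc ∫ x in Ici a, x * gaussBump μ σ x
        = ∫ x in Ici a, (x - μ) * gaussBump μ σ x + μ * gaussBump μ σ x := by
          congr 1 with x
          ring
      _ = σ ^ 2 * gaussBump μ σ a + μ * lZ a μ σ := by
        rw [integral_add (integrable_sub_mul_gaussBump μ hσ).integrableOn
          ((integrable_gaussBump μ hσ).const_mul μ).integrableOn, integral_const_mul,
          integral_Ici_sub_mul_gaussBump μ hσ, lZ_eq_integral]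
  have hZ := (lZ_pos a μ hσ).ne'
  rw [lMean, eq_div_iff hZ, sub_mul, div_mul_cancel₀ _ hZ]
  exact sub_eq_of_eq_add hfirst

theorem lVar_eq : lVar a μ σ
    = σ ^ 2 + σ ^ 2 * (a - μ) * gaussBump μ σ a / lZ a μ σ - (lMean a μ σ - μ) ^ 2 := by
  have hint2 := (integrable_sub_pow_mul_gaussBump μ hσ 2).integrableOn (s := Ici a)
  have hint1 := (integrable_sub_mul_gaussBump μ hσ).integrableOn (s := Ici a)
  have hint0 := (integrable_gaussBump μ hσ).integrableOn (s := Ici a)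
  have hsplit : ∫ x in Ici a, (x - lMean a μ σ) ^ 2 * gaussBump μ σ x
      = (∫ x in Ici a, (x - μ) ^ 2 * gaussBump μ σ x)
        + -2 * (lMean a μ σ - μ) * (∫ x in Ici a, (x - μ) * gaussBump μ σ x)
        + (lMean a μ σ - μ) ^ 2 * lZ a μ σ := by
    calc ∫ x in Ici a, (x - lMean a μ σ) ^ 2 * gaussBump μ σ x
        = ∫ x in Ici a, ((x - μ) ^ 2 * gaussBump μ σ x
            + -2 * (lMean a μ σ - μ) * ((x - μ) * gaussBump μ σ x))
            + (lMean a μ σ - μ) ^ 2 * gaussBump μ σ x := by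
          congr 1 with x
          ring
      _ = _ := by
        rw [integral_add (Integrable.fun_add hint2 (hint1.const_mul _)) (hint0.const_mul _),
          integral_add hint2 (hint1.const_mul _), integral_const_mul, integral_const_mul,
          lZ_eq_integral]
  have hZ := (lZ_pos a μ hσ).ne'
  have hmean : (lMean a μ σ - μ) * lZ a μ σ = σ ^ 2 * gaussBump μ σ a := by
    rw [lMean_sub a μ hσ, div_mul_cancel₀ _ hZ]
  rw [lVar, div_eq_iff hZ]
  change ∫ x in Ici a, (x - lMean a μ σ) ^ 2 * gaussBump μ σ x = _
  rw [hsplit, integral_Ici_sub_sq_mul_gaussBump μ hσ, integral_Ici_sub_mul_gaussBump μ hσ,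
    ← lZ_eq_integral, sub_mul, add_mul, div_mul_cancel₀ _ hZ]
  linear_combination 2 * (lMean a μ σ - μ) * hmean

end truncatedMoments

/-- the variance of a left-truncated Gaussian (with `μ ≥ a`) in terms of the
relative height `H = f(a)/f(μ) = e^{−(μ−a)²/(2σ²)}` at the boundary. -/
theorem lVar_eq_of_height (a μ σ : ℝ) (hσ : 0 < σ) (hμ : a ≤ μ)
    (H ξH : ℝ) (hH : H = Real.exp (-(μ - a) ^ 2 / (2 * σ ^ 2)))
    (hξ : ξH = erf (Real.sqrt (Real.log (1 / H))) + 1) :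
    H ∈ Set.Ioc (0 : ℝ) 1 ∧
      lVar a μ σ =
        (lMean a μ σ - a) ^ 2 *
            (Real.pi * ξH ^ 2 - 2 * H * ξH * Real.sqrt (Real.pi * Real.log (1 / H)) -
              2 * H ^ 2) /
          (2 * (ξH * Real.sqrt (Real.pi * Real.log (1 / H)) + H) ^ 2) := by
  set t := (μ - a) / (σ * √2)
  have ht : 0 ≤ t := div_nonneg (sub_nonneg.2 hμ) (by positivity)
  have hHa : H = gaussBump μ σ a := by rw [hH, gaussBump, ← neg_sub μ a, neg_sq]
  have hHt : H = exp (-t ^ 2) := by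
    rw [hHa, gaussBump_eq_exp_neg_sq, ← neg_sub μ a, neg_div, neg_sq]
  have hlog : log (1 / H) = t ^ 2 := by rw [hHt, one_div, ← exp_neg, log_exp, neg_neg]
  have hH0 : 0 < H := hHt ▸ exp_pos _
  refine ⟨⟨hH0, hHt ▸ exp_le_one_iff.2 (neg_nonpos.2 (sq_nonneg t))⟩, ?_⟩
  have hξt : 1 ≤ ξH := by rw [hξ, hlog, sqrt_sq ht]; linarith [erf_nonneg ht]
  have hZ : lZ a μ σ = σ * √2 * √π / 2 * ξH := by
    rw [lZ_eq_integral, integral_Ici_gaussBump μ hσ, hξ, hlog, sqrt_sq ht]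
  have hμa : μ - a = σ * √2 * t := by simp only [t]; field_simp
  rw [hlog, sqrt_mul pi_pos.le, sqrt_sq ht, lVar_eq a μ hσ, ← sub_add_sub_cancel _ μ a,
    lMean_sub a μ hσ, hZ, ← hHa, ← neg_sub μ a, hμa]
  have hσ2 : σ ^ 2 = (σ * √2) ^ 2 / 2 := by rw [mul_pow, sq_sqrt zero_le_two]; ring
  have hden : 0 < ξH * (√π * t) + H :=
    add_pos_of_nonneg_of_pos (mul_nonneg (by linarith) (by positivity)) hH0
  have hc : 0 < σ * √2 := by positivity
  have hπ : √π ^ 2 = π := sq_sqrt pi_pos.le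
  have hp : 0 < √π := by positivity
  rw [hσ2]
  generalize σ * √2 = c at hc ⊢
  generalize √π = p at hπ hp hden ⊢
  rw [← hπ]
  field_simp
  ring
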